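/- Let G : ℝ^N → ℝ be twice continuously differentiable with ∇G(0) = 0, let η > 0, set M = max{‖∇²G(u)‖ : u ∈ B̄(0, η)} (operator norm) and λ₁ = min{1/4, 1/(2(M² + 1))}. For λ ≥ 0 define E_λ(u, v) = ½‖v‖² + G(u) + λ⟨∇G(u), v⟩. Then for every λ ∈ [0, λ₁] and every (u, v) ∈ B̄(0, η) × ℝ^N one has ‖∇E_λ(u, v)‖² ≥ ½(‖v‖² + ‖∇G(u)‖²); in particular ‖∇G(u)‖ ≤ 2‖∇E_λ(u, v)‖. -/
import Mathlib


open Real Set Metric Filter Topology RealInnerProductSpace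

noncomputable section

/-- The deformed energy `E_λ(u, v) = ½‖v‖² + G(u) + λ⟨∇G(u), v⟩`. -/
def Elam {N : ℕ} (G : EuclideanSpace ℝ (Fin N) → ℝ) (lam : ℝ)
    (u v : EuclideanSpace ℝ (Fin N)) : ℝ :=
  (1 / 2) * ‖v‖ ^ 2 + G u + lam * ⟪gradient G u, v⟫

/-- The full gradient of `E_λ` at `(u, v)` with respect to the product Euclidean inner
product: `∇E_λ(u, v) = (∇G(u) + λ∇²G(u)v, v + λ∇G(u))`. -/
def gradElam {N : ℕ} (G : EuclideanSpace ℝ (Fin N) → ℝ) (lam : ℝ)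
    (u v : EuclideanSpace ℝ (Fin N)) :
    EuclideanSpace ℝ (Fin N) × EuclideanSpace ℝ (Fin N) :=
  (gradient G u + lam • (fderiv ℝ (gradient G) u v), v + lam • gradient G u)

/-- The product Euclidean norm of a pair. -/
def pnorm {N : ℕ} (p : EuclideanSpace ℝ (Fin N) × EuclideanSpace ℝ (Fin N)) : ℝ :=
  Real.sqrt (‖p.1‖ ^ 2 + ‖p.2‖ ^ 2)

set_option maxHeartbeats 1000000 in
theorem stmt12 {N : ℕ} (G : EuclideanSpace ℝ (Fin N) → ℝ) (hG : ContDiff ℝ 2 G)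
    (hcrit : gradient G 0 = 0) (η : ℝ) (hη : 0 < η) (M : ℝ)
    (hM : IsGreatest
      ((fun u => ‖fderiv ℝ (gradient G) u‖) '' closedBall (0 : EuclideanSpace ℝ (Fin N)) η)
      M) :
    ∀ lam ∈ Icc (0:ℝ) (min (1 / 4) (1 / (2 * (M ^ 2 + 1)))),
      ∀ u v : EuclideanSpace ℝ (Fin N), u ∈ closedBall (0 : EuclideanSpace ℝ (Fin N)) η →
        (1 / 2) * (‖v‖ ^ 2 + ‖gradient G u‖ ^ 2) ≤ pnorm (gradElam G lam u v) ^ 2 ∧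
        ‖gradient G u‖ ≤ 2 * pnorm (gradElam G lam u v) := by
  intro lam hlam u v hu
  obtain ⟨hlam0, hlam1⟩ := hlam
  have hlam14 : lam ≤ 1 / 4 := hlam1.trans (min_le_left _ _)
  have hMden : (0:ℝ) < 2 * (M ^ 2 + 1) := by positivity
  have hlamM : lam * (2 * (M ^ 2 + 1)) ≤ 1 := by
    have := hlam1.trans (min_le_right _ _)
    rw [le_div_iff₀ hMden] at this
    linarith
  set a := gradient G u with ha
  set w := fderiv ℝ (gradient G) u v with hw
  have hM0 : (0:ℝ) ≤ M :=
    le_trans (norm_nonneg _) (hM.2 ⟨0, mem_closedBall_self hη.le, rfl⟩)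
  have hHM : ‖fderiv ℝ (gradient G) u‖ ≤ M := hM.2 ⟨u, hu, rfl⟩
  have hHv : ‖w‖ ≤ M * ‖v‖ := by
    refine le_trans ((fderiv ℝ (gradient G) u).le_opNorm v) ?_
    exact mul_le_mul_of_nonneg_right hHM (norm_nonneg v)
  have e1 : ‖a + lam • w‖ ^ 2 = ‖a‖ ^ 2 + 2 * (lam * ⟪a, w⟫) + lam ^ 2 * ‖w‖ ^ 2 := by
    rw [norm_add_sq_real, real_inner_smul_right, norm_smul, Real.norm_eq_abs,
      abs_of_nonneg hlam0]
    ring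
  have e2 : ‖v + lam • a‖ ^ 2 = ‖v‖ ^ 2 + 2 * (lam * ⟪v, a⟫) + lam ^ 2 * ‖a‖ ^ 2 := by
    rw [norm_add_sq_real, real_inner_smul_right, norm_smul, Real.norm_eq_abs,
      abs_of_nonneg hlam0]
    ring
  have i1 : -(‖a‖ * ‖w‖) ≤ ⟪a, w⟫ := neg_le_of_abs_le (abs_real_inner_le_norm a w)
  have i2 : -(‖v‖ * ‖a‖) ≤ ⟪v, a⟫ := neg_le_of_abs_le (abs_real_inner_le_norm v a)
  have hwnn : (0:ℝ) ≤ ‖w‖ := norm_nonneg w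
  have hann : (0:ℝ) ≤ ‖a‖ := norm_nonneg a
  have hvnn : (0:ℝ) ≤ ‖v‖ := norm_nonneg v
  have h1 : ‖a‖ ^ 2 - lam * (‖a‖ ^ 2 + M ^ 2 * ‖v‖ ^ 2) ≤ ‖a + lam • w‖ ^ 2 := by
    nlinarith [mul_nonneg hlam0 (sq_nonneg (‖a‖ - M * ‖v‖)), sq_nonneg lam,
      mul_le_mul_of_nonneg_left hHv (mul_nonneg hlam0 hann),
      mul_nonneg (mul_nonneg hlam0 hlam0) (sq_nonneg ‖w‖)]
  have h2 : ‖v‖ ^ 2 - lam * (‖v‖ ^ 2 + ‖a‖ ^ 2) ≤ ‖v + lam • a‖ ^ 2 := by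
    nlinarith [mul_nonneg hlam0 (sq_nonneg (‖v‖ - ‖a‖)),
      mul_nonneg (mul_nonneg hlam0 hlam0) (sq_nonneg ‖a‖)]
  have hpn : pnorm (gradElam G lam u v) ^ 2 = ‖a + lam • w‖ ^ 2 + ‖v + lam • a‖ ^ 2 := by
    rw [pnorm, gradElam, Real.sq_sqrt (by positivity)]
  have c1 : (0:ℝ) ≤ (1 / 2 - 2 * lam) * ‖a‖ ^ 2 :=
    mul_nonneg (by linarith) (sq_nonneg _)
  have c2 : (0:ℝ) ≤ (1 / 2 - lam * (M ^ 2 + 1)) * ‖v‖ ^ 2 :=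
    mul_nonneg (by nlinarith) (sq_nonneg _)
  have key : (1 / 2) * (‖v‖ ^ 2 + ‖a‖ ^ 2) ≤ pnorm (gradElam G lam u v) ^ 2 := by
    rw [hpn]
    nlinarith [h1, h2, c1, c2]
  refine ⟨key, ?_⟩
  have hp0 : (0:ℝ) ≤ pnorm (gradElam G lam u v) := Real.sqrt_nonneg _
  nlinarith [key, sq_nonneg ‖v‖]
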